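/- arXiv:2512.23402 — 2 statements merged into one kernel-verified Lean document; each statement's English description precedes it below -/
import Mathlib

section
/- For every irrational real number x, the irrationality exponent satisfies μ(x) = 2 + limsup_{n→∞} (log a_{n+1}(x)) / (log q_n(x)), where a_n(x) are the regular continued fraction partial quotients and q_n(x) the convergent denominators. -/
noncomputable def cfX (x : ℝ) : ℕ → ℝ
  | 0 => Int.fract x
  | n + 1 => Int.fract (1 / cfX x n)

/-- Regular continued fraction partial quotients: `rcfA x 0 = ⌊x⌋`, `rcfA x n` for `n ≥ 1`. -/
noncomputable def rcfA (x : ℝ) : ℕ → ℤ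
  | 0 => ⌊x⌋
  | n + 1 => ⌊1 / cfX x n⌋

/-- RCF convergent denominators: `q₀ = 1`, `q₁ = a₁`, `qₙ = aₙ qₙ₋₁ + qₙ₋₂`. -/
noncomputable def rcfQ (x : ℝ) : ℕ → ℤ
  | 0 => 1
  | 1 => rcfA x 1
  | n + 2 => rcfA x (n + 2) * rcfQ x (n + 1) + rcfQ x n

/-- Pairs `(p,q)` with `q ≥ 1`, `|p|` and `q` coprime, and `|x - p/q| < 1/q^μ`. -/
noncomputable def approxSet (x μ : ℝ) : Set (ℤ × ℕ) :=
  {pq | 0 < pq.2 ∧ Nat.Coprime pq.1.natAbs pq.2 ∧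
    |x - (pq.1 : ℝ) / (pq.2 : ℝ)| < 1 / (pq.2 : ℝ) ^ μ}

/-- The irrationality exponent of `x`. -/
noncomputable def irrExp (x : ℝ) : EReal :=
  sSup {e : EReal | ∃ μ : ℝ, e = (μ : EReal) ∧ (approxSet x μ).Infinite}

/-!
The convergents satisfy `|x - p_n / q_n| = 1 / (q_n (q_{n+1} + t q_n))` with `0 < t < 1`,
and `a_{n+1} q_n ≤ q_{n+1} ≤ 2 a_{n+1} q_n`. So `p_n / q_n` approximates `x` to exponent `μ`
as soon as `q_n ^ (μ - 2) < a_{n+1}`, which happens infinitely often when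
`μ - 2 < limsup log a_{n+1} / log q_n`. Conversely, for `μ > 2` an approximation to exponent `μ`
with large denominator satisfies Legendre's criterion `|x - p / q| < 1 / (2 q²)`, so it is a
convergent, and then `q_n ^ (μ - 2) < 4 a_{n+1}`; infinitely many such approximations push
`μ - 2` below the limsup. The convergents of Mathlib's `GenContFract.of x` are exactly the
`p_n / q_n`, which supplies the error formula, the determinant identity and Legendre's theorem.
-/

open GenContFract Filter

section LogRatio

variable {a q : ℕ → ℝ}

theorem le_limsup_log_div_log_of_frequently (hq : Tendsto q atTop atTop) {s C : ℝ}
    (h : ∃ᶠ n in atTop, q n ^ s < C * a n) :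
    (s : EReal) ≤ limsup (fun n => ((Real.log (a n) / Real.log (q n) : ℝ) : EReal)) atTop := by
  refine EReal.ge_of_forall_gt_iff_ge.mp fun t ht => le_limsup_of_frequently_le ?_
  have hts : 0 < s - t := sub_pos.mpr (EReal.coe_lt_coe_iff.mp ht)
  have hlog := Real.tendsto_log_atTop.comp hq
  refine (h.and_eventually ((hq.eventually_gt_atTop 1).and
    ((hlog.const_mul_atTop hts).eventually_gt_atTop (Real.log C)))).mono ?_
  rintro n ⟨hn, hq1, hC⟩
  have hpos : 0 < C * a n := (Real.rpow_pos_of_pos (by linarith) s).trans hn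
  have hlogq : 0 < Real.log (q n) := Real.log_pos hq1
  have := Real.log_lt_log (Real.rpow_pos_of_pos (by linarith) s) hn
  rw [Real.log_rpow (by linarith), Real.log_mul (left_ne_zero_of_mul hpos.ne')
    (right_ne_zero_of_mul hpos.ne')] at this
  simp only [Function.comp_apply] at hC
  rw [EReal.coe_le_coe_iff, le_div_iff₀ hlogq]
  nlinarith

theorem frequently_rpow_lt_of_lt_limsup (hq : Tendsto q atTop atTop) (ha : ∀ n, 0 < a n) {s : ℝ}
    (h : (s : EReal) < limsup (fun n => ((Real.log (a n) / Real.log (q n) : ℝ) : EReal)) atTop) :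
    ∃ᶠ n in atTop, q n ^ s < a n := by
  refine ((frequently_lt_of_lt_limsup (by isBoundedDefault) h).and_eventually
    (hq.eventually_gt_atTop 1)).mono fun n ⟨hn, hq1⟩ => ?_
  rw [EReal.coe_lt_coe_iff, lt_div_iff₀ (Real.log_pos hq1)] at hn
  rw [Real.rpow_def_of_pos (by linarith), ← Real.exp_log (ha n)]
  exact Real.exp_lt_exp.mpr (by linarith)

end LogRatio

section ContinuedFraction

variable {x : ℝ}

theorem exists_mem_approxSet_lt {μ : ℝ} (hμ : 0 ≤ μ) (h : (approxSet x μ).Infinite)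
    (B : ℝ) : ∃ pq ∈ approxSet x μ, B < pq.2 := by
  by_contra! hB
  refine h (((Set.finite_Icc (-⌈B * (|x| + 1)⌉) ⌈B * (|x| + 1)⌉).prod
    (Set.finite_Iic ⌊B⌋₊)).subset ?_)
  rintro ⟨p, q⟩ hpq
  have hqB : (q : ℝ) ≤ B := hB _ hpq
  obtain ⟨hq, -, happrox⟩ := hpq
  have hq' : (1 : ℝ) ≤ q := by exact_mod_cast hq
  refine ⟨abs_le.mp ?_, Nat.le_floor hqB⟩
  have habs : |(p : ℝ)| ≤ B * (|x| + 1) := by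
    have hpow : 1 / (q : ℝ) ^ μ ≤ 1 := by
      rw [div_le_one (by positivity)]
      exact Real.one_le_rpow hq' hμ
    have : |(p : ℝ) / q| ≤ |x| + 1 := by
      have := abs_sub_abs_le_abs_sub ((p : ℝ) / q) x
      rw [abs_sub_comm] at this
      linarith
    rw [abs_div, Nat.abs_cast, div_le_iff₀ (by positivity)] at this
    nlinarith [abs_nonneg x]
  exact_mod_cast habs.trans (Int.le_ceil _)

theorem irrational_cfX (hx : Irrational x) (n : ℕ) : Irrational (cfX x n) := by
  induction n with
  | zero => exact hx.sub_intCast ⌊x⌋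
  | succ n ih => exact (one_div (cfX x n) ▸ ih.inv).sub_intCast _

theorem cfX_pos (hx : Irrational x) (n : ℕ) : 0 < cfX x n :=
  lt_of_le_of_ne (by cases n <;> exact Int.fract_nonneg _) (irrational_cfX hx n).ne_zero.symm

theorem intFractPair_stream_eq (hx : Irrational x) (n : ℕ) :
    IntFractPair.stream x n = some ⟨rcfA x n, cfX x n⟩ := by
  induction n with
  | zero => rfl
  | succ n ih =>
    rw [IntFractPair.stream_succ_of_some ih (cfX_pos hx n).ne']
    simp [IntFractPair.of, rcfA, cfX]

theorem of_s_get?_eq (hx : Irrational x) (n : ℕ) :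
    (GenContFract.of x).s.get? n = some ⟨1, rcfA x (n + 1)⟩ :=
  get?_of_eq_some_of_succ_get?_intFractPair_stream (intFractPair_stream_eq hx (n + 1))

noncomputable def rcfP (x : ℝ) : ℕ → ℤ
  | 0 => rcfA x 0
  | 1 => rcfA x 1 * rcfA x 0 + 1
  | n + 2 => rcfA x (n + 2) * rcfP x (n + 1) + rcfP x n

theorem of_nums_and_dens_eq (hx : Irrational x) :
    ∀ n, (GenContFract.of x).nums n = rcfP x n ∧ (GenContFract.of x).dens n = rcfQ x n
  | 0 => by simp [zeroth_num_eq_h, zeroth_den_eq_one, of_h_eq_floor, rcfP, rcfQ, rcfA]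
  | 1 => by
    simp [first_num_eq (of_s_get?_eq hx 0), first_den_eq (of_s_get?_eq hx 0), of_h_eq_floor,
      rcfP, rcfQ, rcfA]
  | n + 2 => by
    obtain ⟨hp₀, hq₀⟩ := of_nums_and_dens_eq hx n
    obtain ⟨hp₁, hq₁⟩ := of_nums_and_dens_eq hx (n + 1)
    rw [nums_recurrence (of_s_get?_eq hx (n + 1)) hp₀ hp₁,
      dens_recurrence (of_s_get?_eq hx (n + 1)) hq₀ hq₁]
    simp [rcfP, rcfQ]

theorem inv_cfX (n : ℕ) : (cfX x n)⁻¹ = rcfA x (n + 1) + cfX x (n + 1) := by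
  rw [← one_div]
  exact (Int.floor_add_fract _).symm

theorem cfX_lt_one (n : ℕ) : cfX x n < 1 := by
  cases n <;> exact Int.fract_lt_one _

theorem one_le_rcfA (hx : Irrational x) (n : ℕ) : 1 ≤ rcfA x (n + 1) := by
  have h := cfX_pos hx n
  refine Int.le_floor.mpr ?_
  rw [Int.cast_one, le_div_iff₀ h]
  linarith [cfX_lt_one (x := x) n]

theorem rcfQ_add_two (n : ℕ) : rcfQ x (n + 2) = rcfA x (n + 2) * rcfQ x (n + 1) + rcfQ x n := rfl

theorem one_le_rcfQ_and_le_succ (hx : Irrational x) :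
    ∀ n, 1 ≤ rcfQ x n ∧ rcfQ x n ≤ rcfQ x (n + 1)
  | 0 => ⟨le_rfl, one_le_rcfA hx 0⟩
  | n + 1 => by
    obtain ⟨h₀, h₁⟩ := one_le_rcfQ_and_le_succ hx n
    have ha := one_le_rcfA hx (n + 1)
    refine ⟨h₀.trans h₁, ?_⟩
    rw [rcfQ_add_two]
    nlinarith

theorem one_le_rcfQ (hx : Irrational x) (n : ℕ) : 1 ≤ rcfQ x n :=
  (one_le_rcfQ_and_le_succ hx n).1

theorem rcfQ_mono (hx : Irrational x) : Monotone (rcfQ x) :=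
  monotone_nat_of_le_succ fun n => (one_le_rcfQ_and_le_succ hx n).2

theorem cast_rcfQ_pos (hx : Irrational x) (n : ℕ) : (0 : ℝ) < rcfQ x n := by
  exact_mod_cast one_le_rcfQ hx n

theorem abs_sub_rcfP_div_rcfQ (hx : Irrational x) (n : ℕ) :
    |x - rcfP x n / rcfQ x n| =
      1 / (rcfQ x n * (rcfQ x (n + 1) + cfX x (n + 1) * rcfQ x n)) := by
  have hsub := sub_convs_eq (intFractPair_stream_eq hx n)
  have hrec := congrArg Pair.b (contsAux_recurrence (of_s_get?_eq hx n) rfl rfl)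
  have hq₀ : ((GenContFract.of x).contsAux (n + 1)).b = rcfQ x n := (of_nums_and_dens_eq hx n).2
  have hq₁ : ((GenContFract.of x).contsAux (n + 2)).b = rcfQ x (n + 1) :=
    (of_nums_and_dens_eq hx (n + 1)).2
  simp only [(cfX_pos hx n).ne', if_false, conv_eq_num_div_den, (of_nums_and_dens_eq hx n).1,
    (of_nums_and_dens_eq hx n).2, hq₀, inv_cfX] at hsub
  simp only [hq₀, hq₁, one_mul] at hrec
  -- `(contsAux n).b` is `q_{n-1}` (with `q_{-1} = 0`), read off from the recurrence for `q_{n+1}`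
  have hpB : ((GenContFract.of x).contsAux n).b =
      rcfQ x (n + 1) - rcfA x (n + 1) * rcfQ x n := by
    linarith
  have hD : 0 < (rcfQ x n : ℝ) * (rcfQ x (n + 1) + cfX x (n + 1) * rcfQ x n) := by
    have := cfX_pos hx (n + 1)
    have := cast_rcfQ_pos hx n
    have := cast_rcfQ_pos hx (n + 1)
    positivity
  rw [hsub, hpB, abs_div, abs_neg_one_pow, ← abs_of_pos hD]
  congr 2
  ring

theorem abs_sub_rcfP_div_rcfQ_lt (hx : Irrational x) (n : ℕ) :
    |x - rcfP x n / rcfQ x n| < 1 / (rcfQ x n * rcfQ x (n + 1)) := by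
  rw [abs_sub_rcfP_div_rcfQ hx n]
  have hc := mul_pos (cfX_pos hx (n + 1)) (cast_rcfQ_pos hx n)
  have := cast_rcfQ_pos hx n
  have := cast_rcfQ_pos hx (n + 1)
  gcongr
  linarith

theorem lt_abs_sub_rcfP_div_rcfQ (hx : Irrational x) (n : ℕ) :
    1 / (2 * rcfQ x n * rcfQ x (n + 1)) < |x - rcfP x n / rcfQ x n| := by
  rw [abs_sub_rcfP_div_rcfQ hx n]
  have hq₀ := cast_rcfQ_pos hx n
  have := cast_rcfQ_pos hx (n + 1)
  have hle : (rcfQ x n : ℝ) ≤ rcfQ x (n + 1) := by exact_mod_cast rcfQ_mono hx n.le_succ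
  have hc : cfX x (n + 1) * rcfQ x n < rcfQ x (n + 1) := by
    nlinarith [cfX_lt_one (x := x) (n + 1)]
  apply one_div_lt_one_div_of_lt (by have := cfX_pos hx (n + 1); positivity)
  nlinarith [mul_lt_mul_of_pos_left hc hq₀]

theorem rcfP_rcfQ_isCoprime (hx : Irrational x) (n : ℕ) : IsCoprime (rcfP x n) (rcfQ x n) := by
  have hdet := (SimpContFract.of x).determinant (n := n) (by
    simp [terminatedAt_iff_s_none, SimpContFract.of, of_s_get?_eq hx n])
  change (GenContFract.of x).nums n * (GenContFract.of x).dens (n + 1) -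
    (GenContFract.of x).dens n * (GenContFract.of x).nums (n + 1) = (-1) ^ (n + 1) at hdet
  obtain ⟨hp₀, hq₀⟩ := of_nums_and_dens_eq hx n
  obtain ⟨hp₁, hq₁⟩ := of_nums_and_dens_eq hx (n + 1)
  rw [hp₀, hq₀, hp₁, hq₁] at hdet
  have hdetℤ : rcfP x n * rcfQ x (n + 1) - rcfQ x n * rcfP x (n + 1) = (-1) ^ (n + 1) := by
    exact_mod_cast hdet
  refine ⟨(-1) ^ (n + 1) * rcfQ x (n + 1), -(-1) ^ (n + 1) * rcfP x (n + 1), ?_⟩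
  have hsq : ((-1 : ℤ) ^ (n + 1)) ^ 2 = 1 := by
    rw [← pow_mul, mul_comm, pow_mul, neg_one_sq, one_pow]
  linear_combination (-1) ^ (n + 1) * hdetℤ + hsq

theorem rcfP_rcfQ_coprime (hx : Irrational x) (n : ℕ) :
    Nat.Coprime (rcfP x n).natAbs (rcfQ x n).natAbs :=
  Int.isCoprime_iff_gcd_eq_one.mp (rcfP_rcfQ_isCoprime hx n)

noncomputable def rcfPair (x : ℝ) (n : ℕ) : ℤ × ℕ := (rcfP x n, (rcfQ x n).toNat)

theorem natCast_rcfPair_snd (hx : Irrational x) (n : ℕ) : ((rcfPair x n).2 : ℤ) = rcfQ x n :=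
  Int.toNat_of_nonneg (zero_le_one.trans (one_le_rcfQ hx n))

theorem rcfPair_mem_approxSet (hx : Irrational x) {μ : ℝ} {n : ℕ}
    (h : (rcfQ x n : ℝ) ^ μ ≤ rcfQ x n * rcfQ x (n + 1)) : rcfPair x n ∈ approxSet x μ := by
  have hq : ((rcfPair x n).2 : ℝ) = rcfQ x n := by exact_mod_cast natCast_rcfPair_snd hx n
  refine ⟨by exact_mod_cast hq ▸ cast_rcfQ_pos hx n, ?_, ?_⟩
  · rw [← Int.natAbs_natCast (rcfPair x n).2, natCast_rcfPair_snd hx n]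
    exact rcfP_rcfQ_coprime hx n
  · rw [hq]
    refine (abs_sub_rcfP_div_rcfQ_lt hx n).trans_le ?_
    exact one_div_le_one_div_of_le (by have := cast_rcfQ_pos hx n; positivity) h

theorem exists_eq_rcfPair_of_abs_sub_lt (hx : Irrational x) {p : ℤ} {q : ℕ} (hq : 0 < q)
    (hpq : Nat.Coprime p.natAbs q) (h : |x - p / q| < 1 / (2 * (q : ℝ) ^ 2)) :
    ∃ n, (p, q) = rcfPair x n := by
  have hq' : (0 : ℤ) < q := by exact_mod_cast hq
  have hden : (((p : ℚ) / (q : ℤ)).den : ℤ) = q := Rat.den_div_eq_of_coprime hq' hpq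
  obtain ⟨n, hn⟩ := Real.exists_convs_eq_rat (ξ := x) (q := (p : ℚ) / (q : ℤ)) (by
    rw [show (((p : ℚ) / (q : ℤ)).den : ℝ) = q by exact_mod_cast hden]
    push_cast
    exact h)
  rw [conv_eq_num_div_den, (of_nums_and_dens_eq hx n).1, (of_nums_and_dens_eq hx n).2] at hn
  have hn' : ((rcfP x n : ℚ) / (rcfQ x n : ℚ)) = (p : ℚ) / (q : ℤ) := by exact_mod_cast hn
  obtain ⟨hp_eq, hq_eq⟩ := Rat.div_int_inj (by exact_mod_cast cast_rcfQ_pos hx n) hq'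
    (rcfP_rcfQ_coprime hx n) hpq hn'
  exact ⟨n, by rw [rcfPair, hp_eq, hq_eq, Int.toNat_natCast]⟩

theorem rcfA_mul_rcfQ_le (hx : Irrational x) (n : ℕ) :
    rcfA x (n + 1) * rcfQ x n ≤ rcfQ x (n + 1) := by
  cases n with
  | zero => simp [rcfQ]
  | succ n => rw [rcfQ_add_two]; linarith [one_le_rcfQ hx n]

theorem rcfQ_succ_le (hx : Irrational x) (n : ℕ) :
    rcfQ x (n + 1) ≤ 2 * rcfA x (n + 1) * rcfQ x n := by
  have ha := one_le_rcfA hx n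
  cases n with
  | zero => simp only [rcfQ]; linarith
  | succ n =>
    rw [rcfQ_add_two]
    nlinarith [rcfQ_mono hx n.le_succ, one_le_rcfQ hx n]

theorem natCast_le_rcfQ (hx : Irrational x) : ∀ n : ℕ, (n : ℤ) ≤ rcfQ x n
  | 0 => zero_le_one
  | 1 => one_le_rcfA hx 0
  | n + 2 => by
    have := natCast_le_rcfQ hx (n + 1)
    rw [rcfQ_add_two]
    push_cast at this ⊢
    nlinarith [one_le_rcfA hx (n + 1), one_le_rcfQ hx n]

theorem tendsto_rcfQ (hx : Irrational x) : Tendsto (fun n => (rcfQ x n : ℝ)) atTop atTop :=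
  tendsto_atTop_mono (fun n => by exact_mod_cast natCast_le_rcfQ hx n) tendsto_natCast_atTop_atTop

theorem rcfQ_rpow_lt_of_abs_sub_lt (hx : Irrational x) {μ : ℝ} {n : ℕ}
    (h : |x - rcfP x n / rcfQ x n| < 1 / (rcfQ x n : ℝ) ^ μ) :
    (rcfQ x n : ℝ) ^ (μ - 2) < 4 * rcfA x (n + 1) := by
  have hq := cast_rcfQ_pos hx n
  have hlt : (rcfQ x n : ℝ) ^ μ < 2 * rcfQ x n * rcfQ x (n + 1) := by
    have hq₁ := cast_rcfQ_pos hx (n + 1)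
    have := (lt_abs_sub_rcfP_div_rcfQ hx n).trans h
    rwa [one_div_lt_one_div (by positivity) (by positivity)] at this
  have hle : (rcfQ x (n + 1) : ℝ) ≤ 2 * rcfA x (n + 1) * rcfQ x n := by
    exact_mod_cast rcfQ_succ_le hx n
  rw [Real.rpow_sub hq, Real.rpow_two, div_lt_iff₀ (by positivity)]
  nlinarith

theorem frequently_rcfQ_rpow_lt_of_approxSet_infinite (hx : Irrational x) {μ : ℝ} (hμ : 2 < μ)
    (h : (approxSet x μ).Infinite) :
    ∃ᶠ n in atTop, (rcfQ x n : ℝ) ^ (μ - 2) < 4 * rcfA x (n + 1) := by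
  obtain ⟨B, hB⟩ := eventually_atTop.mp
    ((tendsto_rpow_atTop (by linarith : 0 < μ - 2)).eventually_ge_atTop 2)
  refine frequently_atTop.mpr fun N => ?_
  obtain ⟨⟨p, q⟩, hmem, hlt⟩ := exists_mem_approxSet_lt (by linarith) h (max B (rcfQ x N))
  obtain ⟨hq, hpq, happrox⟩ := hmem
  have hq' : (0 : ℝ) < q := by exact_mod_cast hq
  have hlegendre : 1 / (q : ℝ) ^ μ ≤ 1 / (2 * (q : ℝ) ^ 2) := by
    apply one_div_le_one_div_of_le (by positivity)
    rw [show μ = (μ - 2) + 2 by ring, Real.rpow_add hq', Real.rpow_two]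
    exact mul_le_mul_of_nonneg_right (hB _ (le_of_max_le_left hlt.le)) (by positivity)
  obtain ⟨n, hn⟩ := exists_eq_rcfPair_of_abs_sub_lt hx hq hpq (happrox.trans_le hlegendre)
  simp only [rcfPair, Prod.mk.injEq] at hn
  obtain ⟨rfl, rfl⟩ := hn
  have hqn : ((rcfQ x n).toNat : ℝ) = rcfQ x n := by exact_mod_cast natCast_rcfPair_snd hx n
  rw [hqn] at happrox hlt
  refine ⟨n, ?_, rcfQ_rpow_lt_of_abs_sub_lt hx happrox⟩
  by_contra! hnN
  have := rcfQ_mono hx hnN.le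
  have : (rcfQ x n : ℝ) ≤ rcfQ x N := by exact_mod_cast this
  linarith [le_max_right B (rcfQ x N : ℝ)]

theorem approxSet_infinite_of_frequently_rcfQ_rpow_lt (hx : Irrational x) {μ : ℝ}
    (h : ∃ᶠ n in atTop, (rcfQ x n : ℝ) ^ (μ - 2) < rcfA x (n + 1)) :
    (approxSet x μ).Infinite := by
  refine Set.Infinite.of_image Prod.snd (Set.infinite_of_forall_exists_gt fun B => ?_)
  obtain ⟨n, hn, hB⟩ := (h.and_eventually ((tendsto_rcfQ hx).eventually_gt_atTop B)).exists
  have hq := cast_rcfQ_pos hx n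
  have hqn : ((rcfPair x n).2 : ℝ) = rcfQ x n := by exact_mod_cast natCast_rcfPair_snd hx n
  refine ⟨_, ⟨rcfPair x n, rcfPair_mem_approxSet hx ?_, rfl⟩, by exact_mod_cast hqn ▸ hB⟩
  have hle : (rcfA x (n + 1) : ℝ) * rcfQ x n ≤ rcfQ x (n + 1) := by
    exact_mod_cast rcfA_mul_rcfQ_le hx n
  rw [show μ = (μ - 2) + 2 by ring, Real.rpow_add hq, Real.rpow_two]
  nlinarith [mul_lt_mul_of_pos_right hn (mul_pos hq hq)]

end ContinuedFraction

theorem stmt4 (x : ℝ) (hx : Irrational x) :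
    irrExp x = 2 + Filter.limsup
      (fun n : ℕ =>
        ((Real.log ((rcfA x (n + 1) : ℝ)) / Real.log ((rcfQ x n : ℝ)) : ℝ) : EReal))
      Filter.atTop := by
  have hq := tendsto_rcfQ hx
  have ha : ∀ n, (1 : ℝ) ≤ rcfA x (n + 1) := fun n => by exact_mod_cast one_le_rcfA hx n
  have hL : (0 : EReal) ≤ limsup _ atTop := le_limsup_log_div_log_of_frequently (s := 0) (C := 2)
    hq (Frequently.of_forall fun n => by rw [Real.rpow_zero]; linarith [ha n])
  apply le_antisymm
  · refine sSup_le ?_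
    rintro _ ⟨μ, rfl, hμ⟩
    rcases le_or_gt μ 2 with h2 | h2
    · exact (EReal.coe_le_coe_iff.mpr h2).trans (le_add_of_nonneg_right hL)
    · have := le_limsup_log_div_log_of_frequently hq
        (frequently_rcfQ_rpow_lt_of_approxSet_infinite hx h2 hμ)
      rwa [EReal.coe_sub, EReal.sub_le_iff_le_add (.inl (EReal.coe_ne_bot 2))
        (.inl (EReal.coe_ne_top 2)), add_comm] at this
  · refine EReal.ge_of_forall_gt_iff_ge.mp fun r hr => le_sSup ⟨r, rfl, ?_⟩
    refine approxSet_infinite_of_frequently_rcfQ_rpow_lt hx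
      (frequently_rpow_lt_of_lt_limsup hq (fun n => one_pos.trans_le (ha n)) ?_)
    rw [EReal.coe_sub]
    exact EReal.sub_lt_of_lt_add (by rwa [add_comm] at hr)
end

section
/- For every irrational x ∈ (0,1), the backward continued fraction partial quotients satisfy: x = lim_{n→∞} ψ_{b_1(x)} ∘ ⋯ ∘ ψ_{b_n(x)}(0), where ψ_i(y) = 1 − 1/(y + i − 1) and b_n(x) ≥ 2 are the backward continued fraction digits of x. -/
/-- The Renyi backward continued fraction map. -/
noncomputable def renyi (y : ℝ) : ℝ := Int.fract (1 / (1 - y))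

/-- The (n+1)-st backward continued fraction digit of the fractional part of x. -/
noncomputable def bDigit (x : ℝ) (n : ℕ) : ℤ := ⌊1 / (1 - renyi^[n] (Int.fract x))⌋ + 1

/-- BCF branch with integer index. -/
noncomputable def psiZ (i : ℤ) (y : ℝ) : ℝ := 1 - 1 / (y + i - 1)

/-- `bcfApprox x k n` is the point obtained by applying the branches for digits
`b (k+1), ..., b (k+n)` of `x` (outermost first) to `0`. -/
noncomputable def bcfApprox (x : ℝ) : ℕ → ℕ → ℝ
  | _, 0 => 0
  | k, n + 1 => psiZ (bDigit x k) (bcfApprox x (k + 1) n)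

/-!
Write `tₙ = Rⁿ(x)` for the Rényi orbit of `x`; it stays in `[0, 1)`, the digits are
`bₙ₊₁ = ⌊1 / (1 - tₙ)⌋ + 1 ≥ 2`, and `ψ_{bₙ₊₁}(tₙ₊₁) = tₙ`, so
`x = Φₙ(tₙ)` with `Φₙ = ψ_{b₁} ∘ ⋯ ∘ ψ_{bₙ}`. Each `ψ_i` is the Möbius map of `[[1, i - 2], [1, i - 1]]`,
so `Φₙ(y) = (p y + q) / (r y + s)` with `p s - q r = 1`, `r ≥ n` and `s ≥ 1`. Hence
`Φₙ(t) - Φₙ(0) = t / ((r t + s) s) ≤ 1 / (r + s) ≤ 1 / (n + 1)` for `t ∈ [0, 1]`.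
-/

open Set

noncomputable def psiComp (b : ℕ → ℤ) : ℕ → ℝ → ℝ
  | 0 => id
  | n + 1 => psiComp b n ∘ psiZ (b n)

lemma psiComp_succ_apply' (b : ℕ → ℤ) (n : ℕ) (y : ℝ) :
    psiComp b (n + 1) y = psiZ (b 0) (psiComp (fun k => b (k + 1)) n y) := by
  induction n generalizing y with
  | zero => rfl
  | succ n ih => exact ih (psiZ (b (n + 1)) y)

lemma bcfApprox_eq_psiComp (x : ℝ) (n k : ℕ) :
    bcfApprox x k n = psiComp (fun j => bDigit x (k + j)) n 0 := by
  induction n generalizing k with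
  | zero => rfl
  | succ n ih =>
    rw [psiComp_succ_apply', bcfApprox, ih]
    simp only [add_zero, add_assoc, add_comm 1]

lemma psiZ_eq_div (i : ℤ) {y : ℝ} (h : y + i - 1 ≠ 0) :
    psiZ i y = (y + i - 2) / (y + i - 1) := by
  rw [psiZ, eq_div_iff h]
  field_simp
  ring

lemma exists_moebius_psiComp {b : ℕ → ℤ} (hb : ∀ k, 2 ≤ b k) (n : ℕ) :
    ∃ p q r s : ℝ, p * s - q * r = 1 ∧ (n : ℝ) ≤ r ∧ 1 ≤ s ∧
      ∀ y, 0 ≤ y → psiComp b n y = (p * y + q) / (r * y + s) := by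
  induction n with
  | zero => exact ⟨1, 0, 0, 1, by ring, by simp, le_rfl, fun y _ => by simp [psiComp]⟩
  | succ n ih =>
    obtain ⟨p, q, r, s, hdet, hr, hs, hform⟩ := ih
    have hβ : (2 : ℝ) ≤ b n := by exact_mod_cast hb n
    set β : ℝ := (b n : ℝ)
    refine ⟨p + q, (β - 2) * p + (β - 1) * q, r + s, (β - 2) * r + (β - 1) * s,
      by linear_combination hdet, by push_cast; linarith, by nlinarith, fun y hy => ?_⟩
    have hD : 0 < y + β - 1 := by linarith
    have hψ : psiZ (b n) y = (y + β - 2) / (y + β - 1) := psiZ_eq_div _ hD.ne'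
    have hψ0 : 0 ≤ psiZ (b n) y := hψ ▸ div_nonneg (by linarith) (by linarith)
    have hden : 0 < r * psiZ (b n) y + s := by nlinarith
    show psiComp b n (psiZ (b n) y) = _
    rw [hform _ hψ0, div_eq_div_iff hden.ne' (by nlinarith), hψ]
    field_simp
    ring

lemma abs_psiComp_sub_psiComp_zero_le {b : ℕ → ℤ} (hb : ∀ k, 2 ≤ b k) (n : ℕ) {t : ℝ}
    (ht0 : 0 ≤ t) (ht1 : t ≤ 1) :
    |psiComp b n t - psiComp b n 0| ≤ 1 / ((n : ℝ) + 1) := by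
  obtain ⟨p, q, r, s, hdet, hr, hs, hform⟩ := exists_moebius_psiComp hb n
  have hrt : 0 ≤ r * t := mul_nonneg (n.cast_nonneg.trans hr) ht0
  have hs0 : 0 < s := by linarith
  have hden : 0 < r * t + s := by linarith
  have hdiff : psiComp b n t - psiComp b n 0 = t / ((r * t + s) * s) := by
    rw [hform t ht0, hform 0 le_rfl, mul_zero, zero_add, mul_zero, zero_add,
      div_sub_div _ _ hden.ne' hs0.ne']
    congr 1
    linear_combination t * hdet
  rw [hdiff, abs_of_nonneg (by positivity), div_le_div_iff₀ (by positivity) (by positivity)]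
  calc t * ((n : ℝ) + 1) ≤ r * t + s * t := by nlinarith
    _ ≤ 1 * ((r * t + s) * s) := by nlinarith

lemma iterate_renyi_fract_mem_Ico (x : ℝ) (n : ℕ) : renyi^[n] (Int.fract x) ∈ Ico 0 1 := by
  cases n with
  | zero => exact ⟨Int.fract_nonneg x, Int.fract_lt_one x⟩
  | succ n =>
    rw [Function.iterate_succ_apply']
    exact ⟨Int.fract_nonneg _, Int.fract_lt_one _⟩

lemma two_le_bDigit (x : ℝ) (n : ℕ) : 2 ≤ bDigit x n := by
  obtain ⟨h0, h1⟩ := iterate_renyi_fract_mem_Ico x n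
  have hfloor : (1 : ℤ) ≤ ⌊1 / (1 - renyi^[n] (Int.fract x))⌋ :=
    Int.le_floor.2 (by push_cast; exact one_le_one_div (by linarith) (by linarith))
  rw [bDigit]
  omega

lemma psiZ_renyi (t : ℝ) : psiZ (⌊1 / (1 - t)⌋ + 1) (renyi t) = t := by
  have hshift : Int.fract (1 / (1 - t)) + ((⌊1 / (1 - t)⌋ + 1 : ℤ) : ℝ) - 1 = 1 / (1 - t) := by
    push_cast
    rw [Int.fract]
    ring
  rw [psiZ, renyi, hshift, one_div_one_div]
  ring

lemma psiComp_bDigit_iterate_renyi (x : ℝ) (n : ℕ) :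
    psiComp (bDigit x) n (renyi^[n] (Int.fract x)) = Int.fract x := by
  induction n with
  | zero => rfl
  | succ n ih =>
    show psiComp (bDigit x) n (psiZ (bDigit x n) _) = _
    rw [Function.iterate_succ_apply', bDigit, psiZ_renyi, ih]

theorem stmt11_general (x : ℝ) (hx : x ∈ Set.Ioo (0 : ℝ) 1) :
    Filter.Tendsto (fun n => bcfApprox x 0 n) Filter.atTop (nhds x) := by
  have hfract : Int.fract x = x := Int.fract_eq_self.2 ⟨hx.1.le, hx.2⟩
  have hbound (n : ℕ) : dist (bcfApprox x 0 n) x ≤ 1 / ((n : ℝ) + 1) := by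
    obtain ⟨h0, h1⟩ := iterate_renyi_fract_mem_Ico x n
    have := abs_psiComp_sub_psiComp_zero_le (two_le_bDigit x) n h0 h1.le
    rw [psiComp_bDigit_iterate_renyi, hfract, abs_sub_comm, ← Real.dist_eq] at this
    simpa only [bcfApprox_eq_psiComp, zero_add] using this
  rw [tendsto_iff_dist_tendsto_zero]
  exact squeeze_zero (fun n => dist_nonneg) hbound tendsto_one_div_add_atTop_nhds_zero_nat

theorem stmt11 (x : ℝ) (hx : x ∈ Set.Ioo (0 : ℝ) 1) (hirr : Irrational x) :
    Filter.Tendsto (fun n => bcfApprox x 0 n) Filter.atTop (nhds x) :=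
  stmt11_general x hx
end
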